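/- Let p(z) = z^n + a_{n-1}z^{n-1} + … + a_1 z + a_0 be a monic polynomial over ℂ of degree n ≥ 3 with p(z) not identically z^n (so μ(p) > 0). Then τ ≤ (1/12.9)^{1/3} · n · μ(p). -/

import Mathlib

/-!
By Vieta, `a (n - k)` is `± e_k` of the roots, so `‖a (n - k)‖ ≤ C(n, k) μ^k ≤ (n μ)^k / k!`.
Hence the `k`-th term of `τ` is at most `n μ (k! w_k)^(-1/k)`, where `w_k = tauWeight k` is its
weight, and it remains to check `12.9^k ≤ (k! w_k)^3`: for `k = 3` this is an equality
(`3! · 2.15 = 12.9`), for `k = 4` a numerical check, and for `k ≥ 5` it follows from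
`12.9^5 ≤ (5!)^3` by induction.
-/

open Finset

/-- The `k`-th term in the definition of `τ`: for `k = 3` it is `(|a (n-3)|/2.15)^(1/3)`,
for `k = 4` it is `(|a (n-4)|/2)^(1/4)`, and for `k ≥ 5` it is `|a (n-k)|^(1/k)`. -/
noncomputable def tauTerm (n k : ℕ) (a : ℕ → ℂ) : ℝ :=
  if k = 3 then (‖a (n - 3)‖ / 2.15) ^ ((1 : ℝ) / 3)
  else if k = 4 then (‖a (n - 4)‖ / 2) ^ ((1 : ℝ) / 4)
  else (‖a (n - k)‖) ^ ((1 : ℝ) / k)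

/-- `τ = max{(|a_{n-3}|/2.15)^(1/3), (|a_{n-4}|/2)^(1/4), |a_{n-5}|^(1/5), …, |a_0|^(1/n)}`. -/
noncomputable def tau (n : ℕ) (a : ℕ → ℂ) (hn : 3 ≤ n) : ℝ :=
  (Finset.Icc 3 n).sup' (Finset.nonempty_Icc.mpr hn) (fun k => tauTerm n k a)

/-- The root bound `Γ(p)`. -/
noncomputable def Gamma (n : ℕ) (a : ℕ → ℂ) (hn : 3 ≤ n) : ℝ :=
  max (Real.sqrt 3.15 *
        Real.sqrt ((tau n a hn) ^ 2 + max (‖a (n - 2)‖) (2 * (tau n a hn) ^ 2)))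
      ((‖a (n - 1)‖ +
        Real.sqrt ((‖a (n - 1)‖) ^ 2 +
          4 * ((tau n a hn) ^ 2 + max (‖a (n - 2)‖) (2.15 * (tau n a hn) ^ 2)))) / 2)


open Polynomial

namespace Polynomial

variable {R : Type*}

noncomputable def monicOfCoeffs [Semiring R] (n : ℕ) (a : ℕ → R) : R[X] :=
  X ^ n + ∑ i ∈ range n, C (a i) * X ^ i

section Semiring

variable [Semiring R] (n : ℕ) (a : ℕ → R)

theorem degree_sum_C_mul_X_pow_lt :
    (∑ i ∈ range n, C (a i) * X ^ i).degree < (n : WithBot ℕ) := by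
  refine (degree_sum_le _ _).trans_lt ((Finset.sup_lt_iff (WithBot.bot_lt_coe n)).2 fun i hi => ?_)
  exact (degree_C_mul_X_pow_le _ _).trans_lt (WithBot.coe_lt_coe.2 (Finset.mem_range.1 hi))

theorem monicOfCoeffs_monic : (monicOfCoeffs n a).Monic :=
  monic_X_pow_add (degree_sum_C_mul_X_pow_lt n a)

theorem natDegree_monicOfCoeffs [Nontrivial R] : (monicOfCoeffs n a).natDegree = n := by
  rw [monicOfCoeffs, natDegree_add_eq_left_of_degree_lt, natDegree_X_pow]
  simpa only [degree_X_pow] using degree_sum_C_mul_X_pow_lt n a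

theorem coeff_monicOfCoeffs_of_lt {i : ℕ} (hi : i < n) : (monicOfCoeffs n a).coeff i = a i := by
  simp [monicOfCoeffs, coeff_X_pow, hi.ne, coeff_C_mul, hi]

end Semiring

theorem eval_monicOfCoeffs [CommSemiring R] (n : ℕ) (a : ℕ → R) (z : R) :
    (monicOfCoeffs n a).eval z = z ^ n + ∑ i ∈ range n, a i * z ^ i := by
  simp [monicOfCoeffs, eval_finsetSum]

theorem norm_coeff_natDegree_sub_le {K : Type*} [NormedField K] [IsAlgClosed K] {p : K[X]}
    (hp : p.Monic) {μ : ℝ} (hroots : ∀ z ∈ p.roots, ‖z‖ ≤ μ) {k : ℕ} (hk : k ≤ p.natDegree) :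
    ‖p.coeff (p.natDegree - k)‖ ≤ p.natDegree.choose k * μ ^ k := by
  have := coeff_le_of_roots_le (f := RingHom.id K) (p.natDegree - k) hp
    (by simpa using IsAlgClosed.splits p) (by simpa using hroots)
  rwa [map_id, Nat.sub_sub_self hk, Nat.choose_symm hk, mul_comm] at this

end Polynomial

open Polynomial
open scoped Nat

theorem pow_le_factorial_cube {k : ℕ} (hk : 5 ≤ k) : (12.9 : ℝ) ^ k ≤ (k ! : ℝ) ^ 3 := by
  induction k, hk using Nat.le_induction with
  | base => norm_num [Nat.factorial]
  | succ m hm ih =>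
    have hm' : (6 : ℝ) ≤ m + 1 := by exact_mod_cast Nat.succ_le_succ hm
    calc (12.9 : ℝ) ^ (m + 1) = 12.9 ^ m * 12.9 := pow_succ _ _
      _ ≤ (m ! : ℝ) ^ 3 * (m + 1) ^ 3 := by gcongr; nlinarith [pow_le_pow_left₀ (by norm_num) hm' 3]
      _ = ((m + 1) ! : ℝ) ^ 3 := by push_cast [Nat.factorial_succ]; ring

noncomputable def tauWeight (k : ℕ) : ℝ :=
  if k = 3 then 2.15 else if k = 4 then 2 else 1

theorem tauTerm_eq (n k : ℕ) (a : ℕ → ℂ) :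
    tauTerm n k a = (‖a (n - k)‖ / tauWeight k) ^ ((1 : ℝ) / k) := by
  unfold tauTerm tauWeight
  split_ifs <;> simp_all

theorem tauWeight_pos (k : ℕ) : 0 < tauWeight k := by
  unfold tauWeight; split_ifs <;> norm_num

theorem pow_le_factorial_mul_tauWeight_cube {k : ℕ} (hk : 3 ≤ k) :
    (12.9 : ℝ) ^ k ≤ (k ! * tauWeight k) ^ 3 := by
  unfold tauWeight
  split_ifs with h3 h4
  · subst h3; norm_num [Nat.factorial]
  · subst h4; norm_num [Nat.factorial]
  · simpa using pow_le_factorial_cube (k := k) (by omega)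

theorem inv_le_cbrt_inv_pow {b y : ℝ} {k : ℕ} (hb : 0 < b) (hy : 0 < y) (h : b ^ k ≤ y ^ 3) :
    y⁻¹ ≤ (((1 : ℝ) / b) ^ ((1 : ℝ) / 3)) ^ k := by
  have hc : 0 ≤ ((1 : ℝ) / b) ^ ((1 : ℝ) / 3) := by positivity
  have hc3 : (((1 : ℝ) / b) ^ ((1 : ℝ) / 3)) ^ 3 = 1 / b := by
    rw [← Real.rpow_natCast, ← Real.rpow_mul (by positivity)]; norm_num
  refine (pow_le_pow_iff_left₀ (inv_nonneg.2 hy.le) (pow_nonneg hc k) three_ne_zero).1 ?_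
  rw [inv_pow, ← pow_mul, mul_comm, pow_mul, hc3, one_div, inv_pow]
  exact inv_anti₀ (by positivity) h

theorem rpow_div_le_cbrt_mul {x d μ b : ℝ} {n k : ℕ} (hk : k ≠ 0) (hx : 0 ≤ x) (hd : 0 < d)
    (hμ : 0 ≤ μ) (hb : 0 < b) (hxμ : x ≤ n.choose k * μ ^ k) (hbk : b ^ k ≤ (k ! * d) ^ 3) :
    (x / d) ^ ((1 : ℝ) / k) ≤ ((1 : ℝ) / b) ^ ((1 : ℝ) / 3) * n * μ := by
  set c := ((1 : ℝ) / b) ^ ((1 : ℝ) / 3)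
  rw [one_div, Real.rpow_inv_le_iff_of_pos (by positivity) (by positivity)
    (by exact_mod_cast Nat.pos_of_ne_zero hk), Real.rpow_natCast]
  calc x / d ≤ (n ^ k / k ! * μ ^ k) / d := by
        gcongr; exact hxμ.trans (by gcongr; exact Nat.choose_le_pow_div k n)
    _ = (k ! * d)⁻¹ * (n * μ) ^ k := by field_simp; ring
    _ ≤ c ^ k * (n * μ) ^ k := by gcongr; exact inv_le_cbrt_inv_pow hb (by positivity) hbk
    _ = (c * n * μ) ^ k := by ring

theorem tau_le_cube_root_mul_general (n : ℕ) (hn : 3 ≤ n) (a : ℕ → ℂ) (μ : ℝ)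
    (hμ : IsGreatest {x : ℝ | ∃ lam : ℂ,
      lam ^ n + ∑ i ∈ Finset.range n, a i * lam ^ i = 0 ∧ x = ‖lam‖} μ) :
    tau n a hn ≤ ((1 : ℝ) / 12.9) ^ ((1 : ℝ) / 3) * n * μ := by
  obtain ⟨⟨z₀, -, rfl⟩, hub⟩ := hμ
  have hp := monicOfCoeffs_monic n a
  have hdeg := natDegree_monicOfCoeffs n a
  have hroots : ∀ z ∈ (monicOfCoeffs n a).roots, ‖z‖ ≤ ‖z₀‖ := fun z hz =>
    hub ⟨z, (eval_monicOfCoeffs n a z).symm.trans (isRoot_of_mem_roots hz), rfl⟩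
  refine Finset.sup'_le _ _ fun k hk => ?_
  obtain ⟨h3k, hkn⟩ := Finset.mem_Icc.1 hk
  have hcoeff : ‖a (n - k)‖ ≤ n.choose k * ‖z₀‖ ^ k := by
    have := norm_coeff_natDegree_sub_le hp hroots (hdeg ▸ hkn)
    rwa [hdeg, coeff_monicOfCoeffs_of_lt n a (by omega)] at this
  rw [tauTerm_eq]
  exact rpow_div_le_cbrt_mul (by omega) (norm_nonneg _) (tauWeight_pos k) (norm_nonneg _)
    (by norm_num) hcoeff (pow_le_factorial_mul_tauWeight_cube h3k)

/-- For a monic polynomial of degree `n ≥ 3`, not identically `z^n`, with maximum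
root-modulus `μ`, one has `τ ≤ (1/12.9)^(1/3) · n · μ`. -/
theorem tau_le_cube_root_mul (n : ℕ) (hn : 3 ≤ n) (a : ℕ → ℂ)
    (hne : ∃ i < n, a i ≠ 0) (μ : ℝ)
    (hμ : IsGreatest {x : ℝ | ∃ lam : ℂ,
      lam ^ n + ∑ i ∈ Finset.range n, a i * lam ^ i = 0 ∧ x = ‖lam‖} μ) :
    tau n a hn ≤ ((1 : ℝ) / 12.9) ^ ((1 : ℝ) / 3) * n * μ :=
  tau_le_cube_root_mul_general n hn a μ hμ
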